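/- Let m, l, k be natural numbers and let x₁ ≤ x₂ ≤ ⋯ ≤ x_l ≤ x < y ≤ z₁ ≤ z₂ ≤ ⋯ ≤ z_k be letters of [m] (the lists x₁,…,x_l and z₁,…,z_k may be empty). Then the word x₁ x₂ ⋯ x_l y z₁ z₂ ⋯ z_k x is Knuth equivalent to the word y x₁ x₂ ⋯ x_l x z₁ z₂ ⋯ z_k. (This realizes one loading step of the box-ball carrier by elementary Knuth transformations.) -/

import Mathlib

/-- An elementary Knuth transformation applied to three consecutive letters of a word:
`y z x ↦ y x z` when `x < y ≤ z`, and `x z y ↦ z x y` when `x ≤ y < z`. -/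
inductive KnuthStep {α : Type*} [LinearOrder α] : List α → List α → Prop
  | k1 (p s : List α) (x y z : α) (h1 : x < y) (h2 : y ≤ z) :
      KnuthStep (p ++ y :: z :: x :: s) (p ++ y :: x :: z :: s)
  | k2 (p s : List α) (x y z : α) (h1 : x ≤ y) (h2 : y < z) :
      KnuthStep (p ++ x :: z :: y :: s) (p ++ z :: x :: y :: s)

/-- Knuth equivalence: the equivalence relation generated by the elementary Knuth
transformations (finitely many transformations and their inverses). -/
def KnuthEquiv {α : Type*} [LinearOrder α] : List α → List α → Prop :=
  Relation.EqvGen KnuthStep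

/-!
The letter `x` first travels left through `z₁ ⋯ z_k` by steps `y z x ↦ y x z` (valid since
`x < y ≤ z`, and the letter in front of each `z` is `y` or a smaller `z`). Then `y` travels left
through `x₁ ⋯ x_l` by steps `x z y ↦ z x y` turning `xᵢ y xᵢ₊₁` into `y xᵢ xᵢ₊₁`, valid
because `xᵢ ≤ xᵢ₊₁ < y` (with `x_{l+1} = x`).
-/

lemma KnuthStep.append_left {α : Type*} [LinearOrder α] {u v : List α} (c : List α)
    (h : KnuthStep u v) : KnuthStep (c ++ u) (c ++ v) := by
  cases h with
  | k1 p s x y z h1 h2 =>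
      rw [← List.append_assoc, ← List.append_assoc]
      exact KnuthStep.k1 (c ++ p) s x y z h1 h2
  | k2 p s x y z h1 h2 =>
      rw [← List.append_assoc, ← List.append_assoc]
      exact KnuthStep.k2 (c ++ p) s x y z h1 h2

lemma KnuthEquiv.append_left {α : Type*} [LinearOrder α] {u v : List α} (c : List α)
    (h : KnuthEquiv u v) : KnuthEquiv (c ++ u) (c ++ v) := by
  induction h with
  | rel a b hab => exact Relation.EqvGen.rel _ _ (hab.append_left c)
  | refl a => exact Relation.EqvGen.refl _
  | symm a b _ ih => exact Relation.EqvGen.symm _ _ ih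
  | trans a b d _ _ ih₁ ih₂ => exact Relation.EqvGen.trans _ _ _ ih₁ ih₂

lemma knuthEquiv_cons_append_singleton {α : Type*} [LinearOrder α] {x y : α} {zs : List α}
    (hxy : x < y) (hzs : zs.Pairwise (· ≤ ·)) (hyzs : ∀ b ∈ zs, y ≤ b) :
    KnuthEquiv (y :: (zs ++ [x])) (y :: x :: zs) := by
  induction zs generalizing y with
  | nil => exact Relation.EqvGen.refl _
  | cons z zs ih =>
      have hyz : y ≤ z := hyzs z List.mem_cons_self
      have hx_past_zs : KnuthEquiv (y :: z :: (zs ++ [x])) (y :: z :: x :: zs) :=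
        (ih (hxy.trans_le hyz) hzs.of_cons (List.pairwise_cons.mp hzs).1).append_left [y]
      exact Relation.EqvGen.trans _ _ _ hx_past_zs
        (Relation.EqvGen.rel _ _ (KnuthStep.k1 [] zs x y z hxy hyz))

lemma knuthEquiv_append_cons_cons {α : Type*} [LinearOrder α] {x y : α} {xs : List α}
    (rest : List α) (hxy : x < y) (hxs : xs.Pairwise (· ≤ ·)) (hxsx : ∀ a ∈ xs, a ≤ x) :
    KnuthEquiv (xs ++ y :: x :: rest) (y :: (xs ++ x :: rest)) := by
  induction xs with
  | nil => exact Relation.EqvGen.refl _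
  | cons a xs ih =>
      have hax : a ≤ x := hxsx a List.mem_cons_self
      have hy_past_xs : KnuthEquiv (a :: (xs ++ y :: x :: rest)) (a :: y :: (xs ++ x :: rest)) :=
        (ih hxs.of_cons fun b hb => hxsx b (List.mem_cons_of_mem a hb)).append_left [a]
      refine Relation.EqvGen.trans _ _ _ hy_past_xs ?_
      cases xs with
      | nil => exact Relation.EqvGen.rel _ _ (KnuthStep.k2 [] rest a x y hax hxy)
      | cons b xs =>
          have hab : a ≤ b := (List.pairwise_cons.mp hxs).1 b List.mem_cons_self
          have hby : b < y := (hxsx b (by simp)).trans_lt hxy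
          exact Relation.EqvGen.rel _ _ (KnuthStep.k2 [] (xs ++ x :: rest) a b y hab hby)

theorem stmt_0 (m : ℕ) (xs zs : List (Fin m))
    (x y : Fin m)
    (hxs : xs.Pairwise (· ≤ ·)) (hzs : zs.Pairwise (· ≤ ·))
    (hxsx : ∀ a ∈ xs, a ≤ x) (hxy : x < y) (hyzs : ∀ b ∈ zs, y ≤ b) :
    KnuthEquiv (xs ++ y :: (zs ++ [x])) (y :: (xs ++ x :: zs)) :=
  Relation.EqvGen.trans _ _ _ ((knuthEquiv_cons_append_singleton hxy hzs hyzs).append_left xs)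
    (knuthEquiv_append_cons_cons zs hxy hxs hxsx)
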